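/- If A ∈ B(X) is a-polaroid then iso σ_a(A) = iso σ(A). -/

import Mathlib

open Filter Metric Set Asymptotics Topology

namespace Paper

variable {X : Type*} [NormedAddCommGroup X] [NormedSpace ℂ X] [CompleteSpace X]

/-- The ascent of an operator: the least `n` with `ker Tⁿ = ker Tⁿ⁺¹`, `⊤` if none exists. -/
noncomputable def ascent (T : X →L[ℂ] X) : ℕ∞ :=
  sInf ((↑) '' {n : ℕ | LinearMap.ker ((T ^ n : X →L[ℂ] X) : X →ₗ[ℂ] X) = LinearMap.ker ((T ^ (n + 1) : X →L[ℂ] X) : X →ₗ[ℂ] X)})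

/-- The descent of an operator: the least `n` with `range Tⁿ = range Tⁿ⁺¹`, `⊤` if none exists. -/
noncomputable def descent (T : X →L[ℂ] X) : ℕ∞ :=
  sInf ((↑) '' {n : ℕ | LinearMap.range ((T ^ n : X →L[ℂ] X) : X →ₗ[ℂ] X) = LinearMap.range ((T ^ (n + 1) : X →L[ℂ] X) : X →ₗ[ℂ] X)})

/-- `T` has the single-valued extension property at `z₀`. -/
def HasSVEPAt (T : X →L[ℂ] X) (z₀ : ℂ) : Prop :=
  ∀ r > (0 : ℝ), ∀ f : ℂ → X, AnalyticOnNhd ℂ f (ball z₀ r) →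
    (∀ z ∈ ball z₀ r, T (f z) - z • f z = 0) → ∀ z ∈ ball z₀ r, f z = 0

/-- The approximate point spectrum: points where `T - z` is not bounded below. -/
def aspectrum (T : X →L[ℂ] X) : Set ℂ :=
  {z | ¬ ∃ c > (0 : ℝ), ∀ x : X, c * ‖x‖ ≤ ‖(T - z • 1) x‖}

/-- The isolated points of a set `S ⊆ ℂ`. -/
def iso (S : Set ℂ) : Set ℂ := {z ∈ S | 𝓝[S \ {z}] z = ⊥}

/-- The set `Π(T)` of poles of the resolvent of `T`. -/
noncomputable def poles (T : X →L[ℂ] X) : Set ℂ :=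
  {z ∈ spectrum ℂ T | ascent (T - z • 1) = descent (T - z • 1) ∧ ascent (T - z • 1) ≠ ⊤}

/-- The set `Π^a(T)` of left poles of `T`. -/
noncomputable def leftPoles (T : X →L[ℂ] X) : Set ℂ :=
  {z ∈ aspectrum T | ∃ d : ℕ, ascent (T - z • 1) = (d : ℕ∞) ∧
    IsClosed ((LinearMap.range (((T - z • 1) ^ (d + 1) : X →L[ℂ] X) : X →ₗ[ℂ] X) : Submodule ℂ X) : Set X)}

/-- `E(T)`: eigenvalues of `T` which are isolated points of the spectrum. -/
def eigE (T : X →L[ℂ] X) : Set ℂ :=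
  {z ∈ iso (spectrum ℂ T) | ∃ x : X, x ≠ 0 ∧ T x = z • x}

/-- `E^a(T)`: eigenvalues of `T` which are isolated points of the approximate point spectrum. -/
def eigEa (T : X →L[ℂ] X) : Set ℂ :=
  {z ∈ iso (aspectrum T) | ∃ x : X, x ≠ 0 ∧ T x = z • x}

/-- Fredholm operator. -/
def IsFredholm (T : X →L[ℂ] X) : Prop :=
  FiniteDimensional ℂ (LinearMap.ker (T : X →ₗ[ℂ] X)) ∧
  IsClosed ((LinearMap.range (T : X →ₗ[ℂ] X) : Submodule ℂ X) : Set X) ∧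
  FiniteDimensional ℂ (X ⧸ (LinearMap.range (T : X →ₗ[ℂ] X) : Submodule ℂ X))

/-- The Fredholm index `α(T) - β(T)`. -/
noncomputable def fredIndex (T : X →L[ℂ] X) : ℤ :=
  (Module.finrank ℂ (LinearMap.ker (T : X →ₗ[ℂ] X)) : ℤ) -
    (Module.finrank ℂ (X ⧸ (LinearMap.range (T : X →ₗ[ℂ] X) : Submodule ℂ X)) : ℤ)

/-- The Weyl spectrum `σ_w(T)`. -/
noncomputable def weylSpec (T : X →L[ℂ] X) : Set ℂ :=
  {z ∈ spectrum ℂ T | ¬ (IsFredholm (T - z • 1) ∧ fredIndex (T - z • 1) = 0)}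

/-- Upper semi-Fredholm operator. -/
def IsUpperSemiFredholm (T : X →L[ℂ] X) : Prop :=
  FiniteDimensional ℂ (LinearMap.ker (T : X →ₗ[ℂ] X)) ∧
  IsClosed ((LinearMap.range (T : X →ₗ[ℂ] X) : Submodule ℂ X) : Set X)

/-- `ind T ≤ 0`, allowing an infinite-dimensional cokernel. -/
def indexLE0 (T : X →L[ℂ] X) : Prop :=
  (Module.finrank ℂ (LinearMap.ker (T : X →ₗ[ℂ] X)) : Cardinal) ≤
    Module.rank ℂ (X ⧸ (LinearMap.range (T : X →ₗ[ℂ] X) : Submodule ℂ X))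

/-- The approximate (left) Weyl spectrum `σ_aw(T)`. -/
noncomputable def aweylSpec (T : X →L[ℂ] X) : Set ℂ :=
  {z ∈ aspectrum T | ¬ (IsUpperSemiFredholm (T - z • 1) ∧ indexLE0 (T - z • 1))}

/-- The restriction of `T` to the invariant subspace `range (Tⁿ)`. -/
noncomputable def restr (T : X →L[ℂ] X) (n : ℕ) :
    (LinearMap.range ((T ^ n : X →L[ℂ] X) : X →ₗ[ℂ] X) : Submodule ℂ X) →ₗ[ℂ] (LinearMap.range ((T ^ n : X →L[ℂ] X) : X →ₗ[ℂ] X) : Submodule ℂ X) :=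
  (T : X →ₗ[ℂ] X).restrict (fun x hx => by
    obtain ⟨y, hy⟩ := hx
    refine LinearMap.mem_range.mpr ⟨T y, ?_⟩
    have h : (T ^ n) * T = T * (T ^ n) := ((Commute.refl T).pow_left n).eq
    calc (T ^ n) (T y) = ((T ^ n) * T) y := rfl
      _ = (T * T ^ n) y := by rw [h]
      _ = T ((T ^ n) y) := rfl
      _ = T x := by rw [← hy]; rfl)

/-- `T` is B-Weyl: for some `n`, `range (Tⁿ)` is closed and the restriction of `T` to it is
Fredholm of index `0`. -/
noncomputable def IsBWeyl (T : X →L[ℂ] X) : Prop :=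
  ∃ n : ℕ, IsClosed ((LinearMap.range ((T ^ n : X →L[ℂ] X) : X →ₗ[ℂ] X) : Submodule ℂ X) : Set X) ∧
    FiniteDimensional ℂ (LinearMap.ker (restr T n)) ∧
    IsClosed ((LinearMap.range (restr T n) :
        Submodule ℂ (LinearMap.range ((T ^ n : X →L[ℂ] X) : X →ₗ[ℂ] X) : Submodule ℂ X)) :
      Set (LinearMap.range ((T ^ n : X →L[ℂ] X) : X →ₗ[ℂ] X) : Submodule ℂ X)) ∧
    FiniteDimensional ℂ
      ((LinearMap.range ((T ^ n : X →L[ℂ] X) : X →ₗ[ℂ] X) : Submodule ℂ X) ⧸ LinearMap.range (restr T n)) ∧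
    Module.finrank ℂ (LinearMap.ker (restr T n)) =
      Module.finrank ℂ ((LinearMap.range ((T ^ n : X →L[ℂ] X) : X →ₗ[ℂ] X) : Submodule ℂ X) ⧸ LinearMap.range (restr T n))

/-- `T` is upper B-Weyl: for some `n`, `range (Tⁿ)` is closed and the restriction of `T` to it is
upper semi-Fredholm of index `≤ 0`. -/
noncomputable def IsUpperBWeyl (T : X →L[ℂ] X) : Prop :=
  ∃ n : ℕ, IsClosed ((LinearMap.range ((T ^ n : X →L[ℂ] X) : X →ₗ[ℂ] X) : Submodule ℂ X) : Set X) ∧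
    FiniteDimensional ℂ (LinearMap.ker (restr T n)) ∧
    IsClosed ((LinearMap.range (restr T n) :
        Submodule ℂ (LinearMap.range ((T ^ n : X →L[ℂ] X) : X →ₗ[ℂ] X) : Submodule ℂ X)) :
      Set (LinearMap.range ((T ^ n : X →L[ℂ] X) : X →ₗ[ℂ] X) : Submodule ℂ X)) ∧
    (Module.finrank ℂ (LinearMap.ker (restr T n)) : Cardinal) ≤
      Module.rank ℂ ((LinearMap.range ((T ^ n : X →L[ℂ] X) : X →ₗ[ℂ] X) : Submodule ℂ X) ⧸ LinearMap.range (restr T n))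

/-- The B-Weyl spectrum `σ_Bw(T)`. -/
noncomputable def bweylSpec (T : X →L[ℂ] X) : Set ℂ :=
  {z ∈ spectrum ℂ T | ¬ IsBWeyl (T - z • 1)}

/-- The upper B-Weyl spectrum `σ_uBw(T)`. -/
noncomputable def ubweylSpec (T : X →L[ℂ] X) : Set ℂ :=
  {z ∈ aspectrum T | ¬ IsUpperBWeyl (T - z • 1)}

/-- `Φ^iso_Bw(T) = iso σ_w(T) ∩ σ_Bw(T)ᶜ`. -/
noncomputable def phiIsoBw (T : X →L[ℂ] X) : Set ℂ := iso (weylSpec T) ∩ (bweylSpec T)ᶜ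

/-- `Φ^iso_uBw(T) = iso σ_aw(T) ∩ σ_uBw(T)ᶜ`. -/
noncomputable def phiIsoUBw (T : X →L[ℂ] X) : Set ℂ := iso (aweylSpec T) ∩ (ubweylSpec T)ᶜ

/-- `T` is polaroid: isolated spectral points are poles. -/
noncomputable def Polaroid (T : X →L[ℂ] X) : Prop := iso (spectrum ℂ T) ⊆ poles T

/-- `T` is left polaroid: isolated points of `σ_a(T)` are left poles. -/
noncomputable def LeftPolaroid (T : X →L[ℂ] X) : Prop := iso (aspectrum T) ⊆ leftPoles T

/-- `T` is a-polaroid: isolated points of `σ_a(T)` are poles. -/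
noncomputable def APolaroid (T : X →L[ℂ] X) : Prop := iso (aspectrum T) ⊆ poles T

/-- Property `(P1)`: `E(T) = Π^a(T)`. -/
noncomputable def P1 (T : X →L[ℂ] X) : Prop := eigE T = leftPoles T

/-- Property `(P2)`: `E^a(T) = Π(T)`. -/
noncomputable def P2 (T : X →L[ℂ] X) : Prop := eigEa T = poles T

/-- The resolvent of `T` has a pole (finite-order singularity) at `z₀`. -/
noncomputable def HasResolventPoleAt (T : X →L[ℂ] X) (z₀ : ℂ) : Prop :=
  z₀ ∈ iso (spectrum ℂ T) ∧ ∃ n : ℕ, 0 < n ∧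
    (fun z => (z - z₀) ^ n • resolvent T z) =O[𝓝[≠] z₀] (fun _ => (1 : ℝ))

/-- A holomorphic (Riesz) functional calculus for `T` on an open neighbourhood `U ⊇ σ(T)`:
an algebra homomorphism on functions holomorphic on `U`, sending `1 ↦ 1`, `id ↦ T`, and
satisfying the spectral mapping theorem for the spectrum and approximate point spectrum. -/
structure HoloCalcOn (T : X →L[ℂ] X) (U : Set ℂ) where
  isOpen : IsOpen U
  spec_subset : spectrum ℂ T ⊆ U
  toFun : (ℂ → ℂ) → (X →L[ℂ] X)
  map_one : toFun (fun _ => 1) = 1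
  map_id : toFun id = T
  map_add : ∀ f g : ℂ → ℂ, AnalyticOnNhd ℂ f U → AnalyticOnNhd ℂ g U →
    toFun (f + g) = toFun f + toFun g
  map_mul : ∀ f g : ℂ → ℂ, AnalyticOnNhd ℂ f U → AnalyticOnNhd ℂ g U →
    toFun (f * g) = toFun f * toFun g
  map_smul : ∀ (c : ℂ) (f : ℂ → ℂ), AnalyticOnNhd ℂ f U → toFun (c • f) = c • toFun f
  spec_map : ∀ f : ℂ → ℂ, AnalyticOnNhd ℂ f U → spectrum ℂ (toFun f) = f '' spectrum ℂ T
  aspec_map : ∀ f : ℂ → ℂ, AnalyticOnNhd ℂ f U → aspectrum (toFun f) = f '' aspectrum T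

/-- `f` is non-constant on each connected component of `σ(T)`. -/
def NonConstOnSpecComponents (T : X →L[ℂ] X) (f : ℂ → ℂ) : Prop :=
  ∀ z ∈ spectrum ℂ T, ∃ w ∈ connectedComponentIn (spectrum ℂ T) z, f w ≠ f z

/-!
Let `z` be a pole, `S = T - z` and `p = asc S = dsc S`. The closed subspace `K = ker Sᵖ` is
`S`-invariant, `S` is nilpotent on `K`, and `S` induces a bijection of the Banach space `X ⧸ K`
(injective because `ker Sᵖ⁺¹ = K`, surjective because `range Sᵖ = range Sᵖ⁺¹`). For small
`c ≠ 0` the operator `S - c` is thus invertible both on `K` and on `X ⧸ K`, hence on `X`: poles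
are isolated points of `σ(T)`, which settles `iso σ_a(T) ⊆ iso σ(T)` for a-polaroid `T`.

Conversely, let `z` be isolated in `σ(T)`. If `T - z` were bounded below by `c > 0`, then for
`μ ∉ σ(T)` close to `z` the inverse of `T - μ` would have norm at most `(c - |μ - z|)⁻¹`, and
`T - z`, a small perturbation of `T - μ`, would be invertible. So `z ∈ σ_a(T)`, and it is isolated
there because `σ_a(T) ⊆ σ(T)`.
-/

open Function

theorem _root_.spectrum.notMem_iff_isUnit_sub_smul_one {R A : Type*} [CommRing R] [Ring A]
    [Algebra R A] {a : A} {r : R} : r ∉ spectrum R a ↔ IsUnit (a - r • 1) := by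
  rw [spectrum.notMem_iff, Algebra.algebraMap_eq_smul_one, ← IsUnit.neg_iff, neg_sub]

theorem _root_.IsNilpotent.isUnit_sub_smul_one {R A : Type*} [Field R] [Ring A] [Algebra R A]
    {a : A} (ha : IsNilpotent a) {r : R} (hr : r ≠ 0) : IsUnit (a - r • 1) := by
  rw [sub_eq_add_neg, ← neg_smul, ← Algebra.algebraMap_eq_smul_one]
  exact ha.isUnit_add_right_of_commute ((neg_ne_zero.2 hr).isUnit.map _)
    (Algebra.commute_algebraMap_right _ _)

theorem _root_.Module.End.isUnit_of_isUnit_restrict_of_isUnit_mapQ {R M : Type*} [Ring R]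
    [AddCommGroup M] [Module R M] {f : Module.End R M} {K : Submodule R M} (hK : K ≤ K.comap f)
    (hres : IsUnit (f.restrict hK)) (hquot : IsUnit (K.mapQ K f hK)) : IsUnit f := by
  rw [Module.End.isUnit_iff] at hres hquot ⊢
  refine ⟨(injective_iff_map_eq_zero f).2 fun x hx => ?_, fun y => ?_⟩
  · have hxK : x ∈ K := by
      rw [← Submodule.Quotient.mk_eq_zero]
      exact (injective_iff_map_eq_zero _).1 hquot.1 _ (by simp [hx])
    have : (⟨x, hxK⟩ : K) = 0 := (injective_iff_map_eq_zero _).1 hres.1 _ (Subtype.ext hx)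
    simpa using congrArg Subtype.val this
  · obtain ⟨q, hq⟩ := hquot.2 (K.mkQ y)
    obtain ⟨x, rfl⟩ := K.mkQ_surjective q
    have hyx : y - f x ∈ K := by
      rw [← Submodule.Quotient.eq]
      exact hq.symm
    obtain ⟨k, hk⟩ := hres.2 ⟨y - f x, hyx⟩
    refine ⟨x + k, ?_⟩
    have hk' : f k = y - f x := congrArg Subtype.val hk
    rw [map_add, hk', add_sub_cancel]

section Banach

variable {𝕜 E : Type*} [NontriviallyNormedField 𝕜] [NormedAddCommGroup E] [NormedSpace 𝕜 E]

def _root_.Submodule.mapQL (K : Submodule 𝕜 E) (f : E →L[𝕜] E)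
    (h : K ≤ K.comap (f : E →ₗ[𝕜] E)) : (E ⧸ K) →L[𝕜] (E ⧸ K) :=
  K.liftQL (K.mkQL ∘L f) fun _ hx => (Submodule.Quotient.mk_eq_zero K).2 (h hx)

theorem _root_.Submodule.mapQL_mk (K : Submodule 𝕜 E) (f : E →L[𝕜] E)
    (h : K ≤ K.comap (f : E →ₗ[𝕜] E)) (x : E) :
    K.mapQL f h (Submodule.Quotient.mk x) = Submodule.Quotient.mk (f x) :=
  rfl

theorem _root_.ContinuousLinearMap.ker_le_comap_ker_of_commute {f g : E →L[𝕜] E}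
    (hfg : Commute f g) : LinearMap.ker (g : E →ₗ[𝕜] E) ≤
      (LinearMap.ker (g : E →ₗ[𝕜] E)).comap (f : E →ₗ[𝕜] E) := by
  intro x hx
  simp only [Submodule.mem_comap, LinearMap.mem_ker, ContinuousLinearMap.coe_coe] at hx ⊢
  rw [← mul_apply_eq_comp, ← hfg.eq, mul_apply_eq_comp, hx, map_zero]

theorem _root_.ContinuousLinearMap.bijective_mapQL_ker_pow {S : E →L[𝕜] E} {p : ℕ}
    (hker : LinearMap.ker ((S ^ p : E →L[𝕜] E) : E →ₗ[𝕜] E) =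
      LinearMap.ker ((S ^ (p + 1) : E →L[𝕜] E) : E →ₗ[𝕜] E))
    (hrange : LinearMap.range ((S ^ p : E →L[𝕜] E) : E →ₗ[𝕜] E) =
      LinearMap.range ((S ^ (p + 1) : E →L[𝕜] E) : E →ₗ[𝕜] E)) :
    Bijective ((LinearMap.ker ((S ^ p : E →L[𝕜] E) : E →ₗ[𝕜] E)).mapQL S
      (ContinuousLinearMap.ker_le_comap_ker_of_commute (Commute.self_pow S p))) := by
  set K := LinearMap.ker ((S ^ p : E →L[𝕜] E) : E →ₗ[𝕜] E)
  refine ⟨(injective_iff_map_eq_zero _).2 fun q hq => ?_, fun q => ?_⟩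
  · obtain ⟨x, rfl⟩ := K.mkQ_surjective q
    have hSx : S x ∈ K := (Submodule.Quotient.mk_eq_zero K).1 hq
    rw [Submodule.mkQ_apply, Submodule.Quotient.mk_eq_zero, hker, LinearMap.mem_ker,
      ContinuousLinearMap.coe_coe, pow_succ, mul_apply_eq_comp]
    exact hSx
  · obtain ⟨x, rfl⟩ := K.mkQ_surjective q
    obtain ⟨y, hy⟩ : (S ^ p) x ∈ LinearMap.range ((S ^ (p + 1) : E →L[𝕜] E) : E →ₗ[𝕜] E) :=
      hrange ▸ LinearMap.mem_range_self _ x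
    refine ⟨Submodule.Quotient.mk y, ?_⟩
    rw [Submodule.mapQL_mk, Submodule.mkQ_apply, Submodule.Quotient.eq, LinearMap.mem_ker,
      map_sub, ContinuousLinearMap.coe_coe, ← mul_apply_eq_comp, ← pow_succ]
    exact sub_eq_zero.2 hy

theorem _root_.ContinuousLinearMap.exists_pos_mul_norm_le_of_isUnit {A : E →L[𝕜] E}
    (hA : IsUnit A) : ∃ c > 0, ∀ x, c * ‖x‖ ≤ ‖A x‖ := by
  obtain ⟨u, rfl⟩ := hA
  refine ⟨(‖(↑u⁻¹ : E →L[𝕜] E)‖ + 1)⁻¹, by positivity, fun x => ?_⟩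
  rw [inv_mul_le_iff₀ (by positivity)]
  calc ‖x‖ = ‖(↑u⁻¹ : E →L[𝕜] E) ((u : E →L[𝕜] E) x)‖ := by
        rw [← mul_apply_eq_comp, Units.inv_mul, one_apply_eq_self]
    _ ≤ ‖(↑u⁻¹ : E →L[𝕜] E)‖ * ‖(u : E →L[𝕜] E) x‖ := ContinuousLinearMap.le_opNorm _ _
    _ ≤ (‖(↑u⁻¹ : E →L[𝕜] E)‖ + 1) * ‖(u : E →L[𝕜] E) x‖ := by gcongr; linarith

variable [CompleteSpace E]

theorem _root_.ContinuousLinearMap.eventually_isUnit_sub_smul_one_of_ker_range_pow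
    {S : E →L[𝕜] E} {p : ℕ}
    (hker : LinearMap.ker ((S ^ p : E →L[𝕜] E) : E →ₗ[𝕜] E) =
      LinearMap.ker ((S ^ (p + 1) : E →L[𝕜] E) : E →ₗ[𝕜] E))
    (hrange : LinearMap.range ((S ^ p : E →L[𝕜] E) : E →ₗ[𝕜] E) =
      LinearMap.range ((S ^ (p + 1) : E →L[𝕜] E) : E →ₗ[𝕜] E)) :
    ∀ᶠ c in 𝓝[≠] (0 : 𝕜), IsUnit (S - c • 1) := by
  set K := LinearMap.ker ((S ^ p : E →L[𝕜] E) : E →ₗ[𝕜] E)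
  have : IsClosed (K : Set E) := (S ^ p).isClosed_ker
  have hSK := ContinuousLinearMap.ker_le_comap_ker_of_commute (Commute.self_pow S p)
  have hK (c : 𝕜) : K ≤ K.comap ((S - c • 1 : E →L[𝕜] E) : E →ₗ[𝕜] E) :=
    ContinuousLinearMap.ker_le_comap_ker_of_commute
      ((Commute.self_pow S p).sub_left ((Commute.one_left _).smul_left c))
  set Sbar : (E ⧸ K) →L[𝕜] (E ⧸ K) := K.mapQL S hSK
  have hquot : ∀ᶠ c in 𝓝 (0 : 𝕜), IsUnit (Sbar - c • 1) := by
    have hunit : IsUnit Sbar :=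
      ContinuousLinearMap.isUnit_iff_bijective.2
        (ContinuousLinearMap.bijective_mapQL_ker_pow hker hrange)
    have hcont : Continuous fun c : 𝕜 => Sbar - c • 1 := by fun_prop
    have hSbar : Sbar - (0 : 𝕜) • 1 = Sbar := by
      ext x
      simp
    refine hcont.continuousAt.eventually_mem (Units.isOpen.mem_nhds ?_)
    show IsUnit (Sbar - (0 : 𝕜) • 1)
    rwa [hSbar]
  have hnil : IsNilpotent ((S : E →ₗ[𝕜] E).restrict (q := K) hSK) := by
    refine ⟨p, LinearMap.ext fun x => Subtype.ext ?_⟩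
    rw [Module.End.pow_restrict, LinearMap.restrict_apply]
    simpa using x.2
  filter_upwards [nhdsWithin_le_nhds hquot, self_mem_nhdsWithin] with c hc (hc0 : c ≠ 0)
  refine ContinuousLinearMap.isUnit_iff_isUnit_toLinearMap.2
    (Module.End.isUnit_of_isUnit_restrict_of_isUnit_mapQ (hK c) ?_ ?_)
  · have hres : ((S - c • 1 : E →L[𝕜] E) : E →ₗ[𝕜] E).restrict (hK c) =
        (S : E →ₗ[𝕜] E).restrict (q := K) hSK - c • 1 :=
      LinearMap.ext fun _ => rfl
    rw [hres]
    exact hnil.isUnit_sub_smul_one hc0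
  · convert hc.map ContinuousLinearMap.toLinearMapRingHom using 1
    ext x
    rfl

theorem _root_.ContinuousLinearMap.isUnit_of_mul_norm_le_of_isUnit_of_two_mul_norm_sub_lt
    {A B : E →L[𝕜] E} {c : ℝ} (hA : ∀ x, c * ‖x‖ ≤ ‖A x‖) (hB : IsUnit B)
    (hAB : 2 * ‖A - B‖ < c) : IsUnit A := by
  obtain ⟨u, rfl⟩ := hB
  set δ := ‖A - u‖
  have hδ : 0 < c - δ := by linarith [norm_nonneg (A - u)]
  have hinv : ‖(↑u⁻¹ : E →L[𝕜] E)‖ ≤ (c - δ)⁻¹ := by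
    refine ContinuousLinearMap.opNorm_le_bound _ (by positivity) fun y => ?_
    set v := (↑u⁻¹ : E →L[𝕜] E) y
    have huv : (u : E →L[𝕜] E) v = y := by
      rw [← mul_apply_eq_comp, Units.mul_inv, one_apply_eq_self]
    rw [le_inv_mul_iff₀ hδ]
    calc (c - δ) * ‖v‖ = c * ‖v‖ - δ * ‖v‖ := by ring
      _ ≤ ‖A v‖ - ‖(A - u) v‖ := sub_le_sub (hA v) (ContinuousLinearMap.le_opNorm _ _)
      _ ≤ ‖A v - (A - u) v‖ := norm_sub_norm_le _ _
      _ = ‖y‖ := by rw [sub_apply, sub_sub_cancel, huv]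
  -- `A = u (1 - u⁻¹ (u - A))`, and the correction term has norm `< 1`
  have hsmall : ‖(↑u⁻¹ : E →L[𝕜] E) * (u - A)‖ < 1 :=
    calc _ ≤ ‖(↑u⁻¹ : E →L[𝕜] E)‖ * ‖(u : E →L[𝕜] E) - A‖ := norm_mul_le _ _
      _ = ‖(↑u⁻¹ : E →L[𝕜] E)‖ * δ := by rw [norm_sub_rev]
      _ ≤ (c - δ)⁻¹ * δ := by gcongr
      _ < 1 := by rw [inv_mul_lt_iff₀ hδ]; linarith
  have := u.isUnit.mul (isUnit_one_sub_of_norm_lt_one hsmall)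
  rwa [mul_sub, mul_one, Units.mul_inv_cancel_left, sub_sub_cancel] at this

end Banach

theorem _root_.nhdsWithin_diff_singleton_eq_bot_iff {α : Type*} [TopologicalSpace α] {s : Set α}
    {a : α} : 𝓝[s \ {a}] a = ⊥ ↔ ∀ᶠ x in 𝓝[≠] a, x ∉ s := by
  rw [sdiff_eq_compl_inter, nhdsWithin_inter', inf_principal_eq_bot]
  rfl

theorem mem_iso_iff {S : Set ℂ} {z : ℂ} : z ∈ iso S ↔ z ∈ S ∧ ∀ᶠ μ in 𝓝[≠] z, μ ∉ S :=
  and_congr_right' nhdsWithin_diff_singleton_eq_bot_iff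

theorem aspectrum_subset_spectrum {Y : Type*} [NormedAddCommGroup Y] [NormedSpace ℂ Y]
    (T : Y →L[ℂ] Y) : aspectrum T ⊆ spectrum ℂ T := by
  intro z hz
  by_contra hzσ
  exact hz (ContinuousLinearMap.exists_pos_mul_norm_le_of_isUnit
    (spectrum.notMem_iff_isUnit_sub_smul_one.1 hzσ))

theorem mem_aspectrum_of_mem_iso_spectrum {T : X →L[ℂ] X} {z : ℂ}
    (hz : z ∈ iso (spectrum ℂ T)) : z ∈ aspectrum T := by
  rintro ⟨c, hc, hbdd⟩
  obtain ⟨hzσ, hres⟩ := mem_iso_iff.1 hz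
  obtain ⟨μ, hμσ, hμz⟩ :=
    (hres.and (nhdsWithin_le_nhds (Metric.ball_mem_nhds z (half_pos hc)))).exists
  refine absurd hzσ (spectrum.notMem_iff_isUnit_sub_smul_one.2
    (ContinuousLinearMap.isUnit_of_mul_norm_le_of_isUnit_of_two_mul_norm_sub_lt hbdd
      (spectrum.notMem_iff_isUnit_sub_smul_one.1 hμσ) ?_))
  rw [sub_sub_sub_cancel_left, ← sub_smul]
  calc 2 * ‖(μ - z) • (1 : X →L[ℂ] X)‖ ≤ 2 * ‖μ - z‖ := by
        gcongr
        exact ContinuousLinearMap.opNorm_le_bound _ (norm_nonneg _) fun x => by simp [norm_smul]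
    _ < c := by rw [← dist_eq_norm]; linarith [Metric.mem_ball.1 hμz]

theorem iso_spectrum_subset_iso_aspectrum (T : X →L[ℂ] X) :
    iso (spectrum ℂ T) ⊆ iso (aspectrum T) := fun _ hz =>
  mem_iso_iff.2 ⟨mem_aspectrum_of_mem_iso_spectrum hz,
    (mem_iso_iff.1 hz).2.mono fun _ hμ hμa => hμ (aspectrum_subset_spectrum T hμa)⟩

theorem exists_mem_of_sInf_natCast_image_ne_top {s : Set ℕ}
    (h : sInf (((↑) : ℕ → ℕ∞) '' s) ≠ ⊤) : ∃ n ∈ s, sInf (((↑) : ℕ → ℕ∞) '' s) = n := by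
  have hne : (((↑) : ℕ → ℕ∞) '' s).Nonempty := by
    contrapose! h
    rw [h, sInf_empty]
  obtain ⟨n, hn, hn'⟩ := csInf_mem hne
  exact ⟨n, hn, hn'.symm⟩

theorem exists_ker_pow_eq_and_range_pow_eq_of_mem_poles {Y : Type*} [NormedAddCommGroup Y]
    [NormedSpace ℂ Y] {T : Y →L[ℂ] Y} {z : ℂ} (hz : z ∈ poles T) : ∃ p : ℕ,
      LinearMap.ker (((T - z • 1) ^ p : Y →L[ℂ] Y) : Y →ₗ[ℂ] Y) =
        LinearMap.ker (((T - z • 1) ^ (p + 1) : Y →L[ℂ] Y) : Y →ₗ[ℂ] Y) ∧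
      LinearMap.range (((T - z • 1) ^ p : Y →L[ℂ] Y) : Y →ₗ[ℂ] Y) =
        LinearMap.range (((T - z • 1) ^ (p + 1) : Y →L[ℂ] Y) : Y →ₗ[ℂ] Y) := by
  obtain ⟨-, hasc_dsc, hasc⟩ := hz
  obtain ⟨p, hp, hp'⟩ := exists_mem_of_sInf_natCast_image_ne_top hasc
  obtain ⟨q, hq, hq'⟩ := exists_mem_of_sInf_natCast_image_ne_top (hasc_dsc ▸ hasc)
  obtain rfl : p = q := by exact_mod_cast hp'.symm.trans (hasc_dsc.trans hq')
  exact ⟨p, hp, hq⟩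

theorem poles_subset_iso_spectrum (T : X →L[ℂ] X) : poles T ⊆ iso (spectrum ℂ T) := by
  intro z hz
  obtain ⟨p, hker, hrange⟩ := exists_ker_pow_eq_and_range_pow_eq_of_mem_poles hz
  have hunit := ContinuousLinearMap.eventually_isUnit_sub_smul_one_of_ker_range_pow hker hrange
  rw [← sub_self z, ← Filter.map_subRight_nhdsNE, Filter.eventually_map] at hunit
  refine mem_iso_iff.2 ⟨hz.1, hunit.mono fun μ hμ => ?_⟩
  rw [spectrum.notMem_iff_isUnit_sub_smul_one]
  rwa [sub_sub, ← add_smul, add_sub_cancel] at hμ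

/-- a-polaroid implies `iso σ_a(A) = iso σ(A)`. -/
theorem iso_aspectrum_eq_iso_spectrum_of_aPolaroid (A : X →L[ℂ] X) (hA : APolaroid A) :
    iso (aspectrum A) = iso (spectrum ℂ A) :=
  (hA.trans (poles_subset_iso_spectrum A)).antisymm (iso_spectrum_subset_iso_aspectrum A)

end Paper
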